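/- arXiv:2002.05661 — 6 statements merged into one kernel-verified Lean document; each statement's English description precedes it below -/
import Mathlib

section
/- Let F : ℝⁿ → ℝⁿ be a topical map. If F has an additive eigenvector, i.e., there exist h ∈ ℝⁿ and μ ∈ ℝ with F(h) = h + μ, then for every g ∈ ℝⁿ the sequence F^k(g)/k converges to the constant vector with all components equal to μ. -/
open Filter

theorem stmt_5 {n : ℕ}
    (F : (Fin n → ℝ) → (Fin n → ℝ))
    (hconst : ∀ (μ : ℝ) (h : Fin n → ℝ), F (fun i => μ + h i) = fun i => μ + F h i)
    (hmono : ∀ h g : Fin n → ℝ, (∀ i, h i ≤ g i) → ∀ i, F h i ≤ F g i)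
    (h : Fin n → ℝ) (μ : ℝ) (heig : F h = fun i => h i + μ) :
    ∀ g : Fin n → ℝ,
      Tendsto (fun k : ℕ => (k : ℝ)⁻¹ • F^[k] g) atTop (nhds (fun _ => μ)) := by
  intro g
  -- additivity of constants for iterates
  have hconst_iter : ∀ (k : ℕ) (c : ℝ) (x : Fin n → ℝ),
      F^[k] (fun i => c + x i) = fun i => c + F^[k] x i := by
    intro k
    induction k with
    | zero => intro c x; simp
    | succ k ih =>
      intro c x
      rw [Function.iterate_succ_apply, hconst, ih]
      simp [Function.iterate_succ_apply]
  -- iterates of h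
  have hiter_h : ∀ k : ℕ, F^[k] h = fun i => h i + k * μ := by
    intro k
    induction k with
    | zero => simp
    | succ k ih =>
      rw [Function.iterate_succ_apply', ih]
      have : (fun i => h i + k * μ) = fun i => (k * μ : ℝ) + h i := by
        funext i; ring
      rw [this, hconst, heig]
      funext i
      push_cast
      ring
  -- monotonicity of iterates
  have hmono_iter : ∀ (k : ℕ) (a b : Fin n → ℝ), (∀ i, a i ≤ b i) →
      ∀ i, F^[k] a i ≤ F^[k] b i := by
    intro k
    induction k with
    | zero => intro a b hab; simpa using hab
    | succ k ih =>
      intro a b hab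
      rw [Function.iterate_succ_apply', Function.iterate_succ_apply']
      exact hmono _ _ (ih a b hab)
  -- bound g between h - c and h + c
  obtain ⟨c, hc⟩ : ∃ c : ℝ, ∀ i, |g i - h i| ≤ c := by
    rcases Finite.exists_le (fun i => |g i - h i|) with ⟨c, hc⟩
    exact ⟨c, hc⟩
  have hub : ∀ (k : ℕ) (i : Fin n), F^[k] g i ≤ c + h i + k * μ := by
    intro k i
    have h1 : ∀ j, g j ≤ c + h j := by
      intro j
      have := (abs_le.mp (hc j)).2
      linarith
    have h2 := hmono_iter k g (fun j => c + h j) h1 i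
    rw [hconst_iter k c h, hiter_h k] at h2
    simp only at h2; linarith [h2]
  have hlb : ∀ (k : ℕ) (i : Fin n), -c + h i + k * μ ≤ F^[k] g i := by
    intro k i
    have h1 : ∀ j, (-c) + h j ≤ g j := by
      intro j
      have := (abs_le.mp (hc j)).1
      linarith
    have h2 := hmono_iter k (fun j => (-c) + h j) g h1 i
    rw [hconst_iter k (-c) h, hiter_h k] at h2
    simp only at h2; linarith [h2]
  rw [tendsto_pi_nhds]
  intro i
  have hlow : Tendsto (fun k : ℕ => (k : ℝ)⁻¹ * (-c + h i + k * μ)) atTop (nhds μ) := by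
    have h1 : Tendsto (fun k : ℕ => (k : ℝ)⁻¹) atTop (nhds 0) :=
      tendsto_inv_atTop_zero.comp tendsto_natCast_atTop_atTop
    have h2 : Tendsto (fun k : ℕ => (k : ℝ)⁻¹ * (-c + h i) + (k : ℝ)⁻¹ * (k * μ))
        atTop (nhds (0 * (-c + h i) + μ)) := by
      apply Tendsto.add
      · exact h1.mul_const _
      · apply Tendsto.congr' (f₁ := fun _ : ℕ => μ)
        · filter_upwards [eventually_ne_atTop 0] with k hk
          field_simp
        · exact tendsto_const_nhds
    simpa [mul_add] using h2
  have hhigh : Tendsto (fun k : ℕ => (k : ℝ)⁻¹ * (c + h i + k * μ)) atTop (nhds μ) := by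
    have h1 : Tendsto (fun k : ℕ => (k : ℝ)⁻¹) atTop (nhds 0) :=
      tendsto_inv_atTop_zero.comp tendsto_natCast_atTop_atTop
    have h2 : Tendsto (fun k : ℕ => (k : ℝ)⁻¹ * (c + h i) + (k : ℝ)⁻¹ * (k * μ))
        atTop (nhds (0 * (c + h i) + μ)) := by
      apply Tendsto.add
      · exact h1.mul_const _
      · apply Tendsto.congr' (f₁ := fun _ : ℕ => μ)
        · filter_upwards [eventually_ne_atTop 0] with k hk
          field_simp
        · exact tendsto_const_nhds
    simpa [mul_add] using h2
  apply tendsto_of_tendsto_of_tendsto_of_le_of_le hlow hhigh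
  · intro k
    simp only [Pi.smul_apply, smul_eq_mul]
    have : (0 : ℝ) ≤ (k : ℝ)⁻¹ := by positivity
    exact mul_le_mul_of_nonneg_left (hlb k i) this
  · intro k
    simp only [Pi.smul_apply, smul_eq_mul]
    have : (0 : ℝ) ≤ (k : ℝ)⁻¹ := by positivity
    exact mul_le_mul_of_nonneg_left (hub k i) this
end

section
/- Let T̄ be a coherent upper transition operator and S ⊆ X with T̄ 1_{S^c}(x) = 0 for all x ∈ S. Then for every h ∈ L(X) and every x ∈ S, T̄h(x) = T̄(h·1_S)(x); consequently, for f ∈ L(X), the operator T̄_f defined by T̄_f h := f + T̄h satisfies T̄_f h(x) = T̄_f(h·1_S)(x) for all x ∈ S. -/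
theorem stmt_9 {X : Type*} [Fintype X] [Nonempty X]
    (T : (X → ℝ) → (X → ℝ))
    (hbd : ∀ (h : X → ℝ) (x : X), (⨅ y, h y) ≤ T h x ∧ T h x ≤ ⨆ y, h y)
    (hsub : ∀ (h g : X → ℝ) (x : X), T (h + g) x ≤ T h x + T g x)
    (hhom : ∀ (lam : ℝ), 0 ≤ lam → ∀ h : X → ℝ, T (lam • h) = lam • T h)
    (S : Set X)
    (hS : ∀ x ∈ S, T (Set.indicator Sᶜ (fun _ => (1:ℝ))) x = 0)
    (f : X → ℝ) :
    (∀ (h : X → ℝ), ∀ x ∈ S, T h x = T (Set.indicator S h) x) ∧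
    (∀ (h : X → ℝ), ∀ x ∈ S, f x + T h x = f x + T (Set.indicator S h) x) := by
  -- monotonicity
  have mono : ∀ (g g' : X → ℝ), (∀ y, g y ≤ g' y) → ∀ x, T g x ≤ T g' x := by
    intro g g' hle x
    have h1 : T g x ≤ T g' x + T (g - g') x := by
      have := hsub g' (g - g') x
      simpa using this
    have h2 : T (g - g') x ≤ ⨆ y, (g - g') y := (hbd _ x).2
    have h3 : (⨆ y, (g - g') y) ≤ 0 := ciSup_le fun y => by
      simpa using sub_nonpos.mpr (hle y)
    linarith
  have key : ∀ (h : X → ℝ), ∀ x ∈ S, T h x = T (Set.indicator S h) x := by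
    intro h x hx
    set c : ℝ := ⨆ y, |h y| with hc
    have hbdd : BddAbove (Set.range fun y => |h y|) :=
      (Set.finite_range _).bddAbove
    have habs : ∀ y, |h y| ≤ c := fun y => le_ciSup hbdd y
    have hc0 : 0 ≤ c := le_trans (abs_nonneg _) (habs (Classical.arbitrary X))
    have hTc : T (c • Set.indicator Sᶜ (fun _ => (1:ℝ))) x = 0 := by
      rw [hhom c hc0]
      simp [hS x hx]
    -- T (ind Sᶜ h) x ≤ 0 and T (- ind Sᶜ h) x ≤ 0
    have hup : ∀ g : X → ℝ, (∀ y, g y ≤ |h y|) →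
        T (Set.indicator Sᶜ g) x ≤ 0 := by
      intro g hg
      have hle : ∀ y, Set.indicator Sᶜ g y ≤
          (c • Set.indicator Sᶜ (fun _ => (1:ℝ))) y := by
        intro y
        by_cases hy : y ∈ Sᶜ
        · simp only [Set.indicator_of_mem hy, Pi.smul_apply, smul_eq_mul, mul_one]
          exact le_trans (hg y) (habs y)
        · simp [Set.indicator_of_notMem hy]
      calc T (Set.indicator Sᶜ g) x ≤ _ := mono _ _ hle x
        _ = 0 := hTc
    have h1 : T (Set.indicator Sᶜ h) x ≤ 0 :=
      hup h fun y => le_abs_self _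
    have h2 : T (Set.indicator Sᶜ (-h)) x ≤ 0 :=
      hup (-h) fun y => by simpa using neg_le_abs (h y)
    have hdecomp : Set.indicator S h + Set.indicator Sᶜ h = h :=
      Set.indicator_self_add_compl S h
    have hA : T h x ≤ T (Set.indicator S h) x := by
      have := hsub (Set.indicator S h) (Set.indicator Sᶜ h) x
      rw [hdecomp] at this
      linarith
    have hB : T (Set.indicator S h) x ≤ T h x := by
      have heq : h + Set.indicator Sᶜ (-h) = Set.indicator S h := by
        funext y
        by_cases hy : y ∈ S
        · simp [Set.indicator_of_notMem (by simpa using hy : y ∉ Sᶜ),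
            Set.indicator_of_mem hy]
        · simp [Set.indicator_of_mem (by simpa using hy : y ∈ Sᶜ),
            Set.indicator_of_notMem hy]
      have := hsub h (Set.indicator Sᶜ (-h)) x
      rw [heq] at this
      linarith
    linarith
  refine ⟨key, fun h x hx => by rw [key h x hx]⟩
end

section
/- Let T̄ be a coherent upper transition operator with a nonempty top class R (T̄ 1_{R^c} vanishes on R) that is absorbing: for every x ∈ R^c there exists k ∈ ℕ with T̄^k 1_{R^c}(x) < 1. Then lim_{k→∞} T̄^k 1_{R^c} = 0 (pointwise, equivalently uniformly since X is finite). -/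
open Filter

theorem stmt_11 {X : Type*} [Fintype X] [Nonempty X]
    (T : (X → ℝ) → (X → ℝ))
    (hbd : ∀ (h : X → ℝ) (x : X), (⨅ y, h y) ≤ T h x ∧ T h x ≤ ⨆ y, h y)
    (hsub : ∀ (h g : X → ℝ) (x : X), T (h + g) x ≤ T h x + T g x)
    (hhom : ∀ (lam : ℝ), 0 ≤ lam → ∀ h : X → ℝ, T (lam • h) = lam • T h)
    (R : Set X) (hRne : R.Nonempty)
    (hR : ∀ x ∈ R, T (Set.indicator Rᶜ (fun _ => (1:ℝ))) x = 0)
    (hTCA : ∀ x ∈ Rᶜ, ∃ k : ℕ, T^[k+1] (Set.indicator Rᶜ (fun _ => (1:ℝ))) x < 1) :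
    ∀ x : X,
      Tendsto (fun k : ℕ => T^[k] (Set.indicator Rᶜ (fun _ => (1:ℝ))) x) atTop (nhds 0) := by
  intro x
  set f : X → ℝ := Set.indicator Rᶜ (fun _ => (1:ℝ)) with hfdef
  -- monotonicity of T
  have hmono : ∀ h g : X → ℝ, (∀ y, h y ≤ g y) → ∀ y, T h y ≤ T g y := by
    intro h g hle y
    have h1 : T h y ≤ T g y + T (h - g) y := by
      have := hsub g (h - g) y
      simpa using this
    have h2 : T (h - g) y ≤ ⨆ z, (h - g) z := (hbd _ y).2
    have h3 : (⨆ z, (h - g) z) ≤ 0 :=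
      ciSup_le fun z => sub_nonpos.2 (hle z)
    linarith
  -- T preserves nonnegativity
  have hposT : ∀ h : X → ℝ, (∀ y, 0 ≤ h y) → ∀ y, 0 ≤ T h y := by
    intro h hh y
    have h1 : (0:ℝ) ≤ ⨅ z, h z := le_ciInf hh
    linarith [(hbd h y).1]
  have hf0 : ∀ y, 0 ≤ f y := fun y => Set.indicator_nonneg (fun _ _ => zero_le_one) y
  have hf1 : ∀ y, f y ≤ 1 := by
    intro y
    by_cases hy : y ∈ Rᶜ
    · simp [hfdef, Set.indicator_of_mem hy]
    · simp [hfdef, Set.indicator_of_notMem hy]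
  have hTf : ∀ y, T f y ≤ f y := by
    intro y
    by_cases hy : y ∈ R
    · rw [hR y hy]; exact hf0 y
    · have : f y = 1 := by simp [hfdef, Set.indicator_of_mem (by simpa using hy : y ∈ Rᶜ)]
      rw [this]
      exact le_trans (hbd f y).2 (ciSup_le hf1)
  set a : ℕ → X → ℝ := fun k => T^[k] f with hadef
  have anonneg : ∀ k y, 0 ≤ a k y := by
    intro k
    induction k with
    | zero => simpa [hadef] using hf0
    | succ n ih =>
        intro y
        have : a (n+1) = T (a n) := by
          simp [hadef, Function.iterate_succ_apply']
        rw [this]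
        exact hposT (a n) ih y
  have itermono : ∀ k (h g : X → ℝ), (∀ y, h y ≤ g y) → ∀ y, T^[k] h y ≤ T^[k] g y := by
    intro k
    induction k with
    | zero => intro h g hle y; simpa using hle y
    | succ n ih =>
        intro h g hle y
        rw [Function.iterate_succ_apply', Function.iterate_succ_apply']
        exact hmono _ _ (ih h g hle) y
  have adec : ∀ m k, m ≤ k → ∀ y, a k y ≤ a m y := by
    intro m k hmk
    induction k, hmk using Nat.le_induction with
    | base => intro y; exact le_refl _
    | succ n hn ih =>
        intro y
        have step : a (n+1) y ≤ a n y := by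
          have : a (n+1) = T^[n] (T f) := by
            simp [hadef, Function.iterate_succ_apply]
          rw [this]
          exact itermono n (T f) f hTf y
        exact le_trans step (ih y)
  -- choose absorption times
  choose kfun hk using hTCA
  classical
  set g : X → ℕ := fun y => if hy : y ∈ Rᶜ then kfun y hy + 1 else 0 with hgdef
  set N : ℕ := Finset.univ.sup g + 1 with hNdef
  have hN1 : 1 ≤ N := Nat.le_add_left 1 _
  have hRcN : ∀ y, y ∈ Rᶜ → a N y < 1 := by
    intro y hy
    have h1 : kfun y hy + 1 ≤ N := by
      have : g y ≤ Finset.univ.sup g := Finset.le_sup (Finset.mem_univ y)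
      have hgy : g y = kfun y hy + 1 := dif_pos hy
      omega
    exact lt_of_le_of_lt (adec _ _ h1 y) (hk y hy)
  have hRN : ∀ y, y ∈ R → a N y = 0 := by
    intro y hy
    have h1 : a N y ≤ a 1 y := adec 1 N hN1 y
    have h2 : a 1 y = 0 := by
      simpa [hadef] using hR y hy
    exact le_antisymm (by rw [← h2]; exact h1) (anonneg N y)
  set β : ℝ := Finset.univ.sup' Finset.univ_nonempty (a N) with hβdef
  have hβlt : β < 1 := by
    rw [hβdef, Finset.sup'_lt_iff]
    intro y _
    by_cases hy : y ∈ R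
    · rw [hRN y hy]; exact zero_lt_one
    · exact hRcN y (by simpa using hy)
  have hβ0 : 0 ≤ β := by
    obtain ⟨z⟩ := (inferInstance : Nonempty X)
    exact le_trans (anonneg N z) (Finset.le_sup' (a N) (Finset.mem_univ z))
  have hkey : ∀ y, a N y ≤ β * f y := by
    intro y
    by_cases hy : y ∈ R
    · have : f y = 0 := by
        simp [hfdef, Set.indicator_of_notMem (by simpa using hy : y ∉ Rᶜ)]
      rw [hRN y hy, this, mul_zero]
    · have : f y = 1 := by
        simp [hfdef, Set.indicator_of_mem (by simpa using hy : y ∈ Rᶜ)]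
      rw [this, mul_one]
      exact Finset.le_sup' (a N) (Finset.mem_univ y)
  have iterhom : ∀ k (c : ℝ), 0 ≤ c → ∀ h : X → ℝ, T^[k] (c • h) = c • T^[k] h := by
    intro k c hc
    induction k with
    | zero => intro h; simp
    | succ n ih =>
        intro h
        rw [Function.iterate_succ_apply', Function.iterate_succ_apply', ih, hhom c hc]
  have hmain : ∀ m y, a (m * N) y ≤ β ^ m * f y := by
    intro m
    induction m with
    | zero => intro y; simp [hadef]
    | succ m ih =>
        intro y
        have e1 : a ((m+1) * N) y = T^[m * N] (a N) y := by
          have : (m+1) * N = m * N + N := by ring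
          simp [hadef, this, Function.iterate_add_apply]
        have e2 : T^[m * N] (a N) y ≤ T^[m * N] (β • f) y :=
          itermono _ _ _ (fun z => hkey z) y
        have e3 : T^[m * N] (β • f) y = β * a (m * N) y := by
          rw [iterhom _ β hβ0]
          simp [hadef]
        have e4 : β * a (m * N) y ≤ β * (β ^ m * f y) :=
          mul_le_mul_of_nonneg_left (ih y) hβ0
        calc a ((m+1) * N) y = T^[m * N] (a N) y := e1
          _ ≤ T^[m * N] (β • f) y := e2
          _ = β * a (m * N) y := e3
          _ ≤ β * (β ^ m * f y) := e4
          _ = β ^ (m+1) * f y := by ring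
  rw [Metric.tendsto_atTop]
  intro ε hε
  obtain ⟨m, hm⟩ := exists_pow_lt_of_lt_one hε hβlt
  refine ⟨m * N, fun k hkK => ?_⟩
  have h1 : a k x ≤ β ^ m := by
    calc a k x ≤ a (m * N) x := adec _ _ hkK x
      _ ≤ β ^ m * f x := hmain m x
      _ ≤ β ^ m * 1 := mul_le_mul_of_nonneg_left (hf1 x) (pow_nonneg hβ0 m)
      _ = β ^ m := mul_one _
  have h2 : (0:ℝ) ≤ a k x := anonneg k x
  rw [Real.dist_eq, sub_zero, abs_of_nonneg h2]
  exact lt_of_le_of_lt h1 hm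
end

section
/- Let T̄ be a coherent upper transition operator with absorbing top class R (as in TCA). Then for every ε > 0 there exists k₁ ∈ ℕ such that for all k ≥ k₁ and all h ∈ L(X), ‖T̄^k h − T̄^k(h·1_R)‖∞ ≤ ‖h‖∞ · ε. -/
section aux
variable {X : Type*} [Fintype X] [Nonempty X]
variable (T : (X → ℝ) → (X → ℝ))

theorem aux_mono
    (hbd : ∀ (h : X → ℝ) (x : X), (⨅ y, h y) ≤ T h x ∧ T h x ≤ ⨆ y, h y)
    (hsub : ∀ (h g : X → ℝ) (x : X), T (h + g) x ≤ T h x + T g x)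
    {h g : X → ℝ} (hle : ∀ x, h x ≤ g x) : ∀ x, T h x ≤ T g x := by
  intro x
  have h1 : h = g + (h - g) := by funext y; simp
  have h2 : T h x ≤ T g x + T (h - g) x := by
    calc T h x = T (g + (h - g)) x := by rw [← h1]
    _ ≤ _ := hsub g (h - g) x
  have h3 : T (h - g) x ≤ ⨆ y, (h - g) y := (hbd _ x).2
  have h4 : (⨆ y, (h - g) y) ≤ 0 := by
    apply ciSup_le
    intro y
    simpa [sub_nonpos] using hle y
  linarith

theorem aux_iter_mono
    (hbd : ∀ (h : X → ℝ) (x : X), (⨅ y, h y) ≤ T h x ∧ T h x ≤ ⨆ y, h y)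
    (hsub : ∀ (h g : X → ℝ) (x : X), T (h + g) x ≤ T h x + T g x)
    (k : ℕ) {h g : X → ℝ} (hle : ∀ x, h x ≤ g x) : ∀ x, T^[k] h x ≤ T^[k] g x := by
  induction k generalizing h g with
  | zero => simpa using hle
  | succ n ih =>
    intro x
    rw [Function.iterate_succ_apply, Function.iterate_succ_apply]
    exact ih (aux_mono T hbd hsub hle) x

theorem aux_iter_sub
    (hbd : ∀ (h : X → ℝ) (x : X), (⨅ y, h y) ≤ T h x ∧ T h x ≤ ⨆ y, h y)
    (hsub : ∀ (h g : X → ℝ) (x : X), T (h + g) x ≤ T h x + T g x)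
    (k : ℕ) (h g : X → ℝ) : ∀ x, T^[k] (h + g) x ≤ T^[k] h x + T^[k] g x := by
  induction k generalizing h g with
  | zero => simp
  | succ n ih =>
    intro x
    rw [Function.iterate_succ_apply, Function.iterate_succ_apply,
      Function.iterate_succ_apply]
    calc T^[n] (T (h + g)) x ≤ T^[n] (T h + T g) x :=
          aux_iter_mono T hbd hsub n (fun y => hsub h g y) x
      _ ≤ _ := ih (T h) (T g) x

theorem aux_iter_hom
    (hhom : ∀ (lam : ℝ), 0 ≤ lam → ∀ h : X → ℝ, T (lam • h) = lam • T h)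
    (k : ℕ) (lam : ℝ) (hl : 0 ≤ lam) (h : X → ℝ) :
    T^[k] (lam • h) = lam • T^[k] h := by
  induction k generalizing h with
  | zero => simp
  | succ n ih =>
    rw [Function.iterate_succ_apply, Function.iterate_succ_apply, hhom lam hl, ih]

theorem aux_iter_nonneg
    (hbd : ∀ (h : X → ℝ) (x : X), (⨅ y, h y) ≤ T h x ∧ T h x ≤ ⨆ y, h y)
    (k : ℕ) {h : X → ℝ} (hh : ∀ x, 0 ≤ h x) : ∀ x, 0 ≤ T^[k] h x := by
  induction k generalizing h with
  | zero => simpa using hh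
  | succ n ih =>
    intro x
    rw [Function.iterate_succ_apply]
    refine ih (fun y => ?_) x
    refine le_trans ?_ (hbd h y).1
    exact le_ciInf hh

end aux

theorem stmt_12 {X : Type*} [Fintype X] [Nonempty X]
    (T : (X → ℝ) → (X → ℝ))
    (hbd : ∀ (h : X → ℝ) (x : X), (⨅ y, h y) ≤ T h x ∧ T h x ≤ ⨆ y, h y)
    (hsub : ∀ (h g : X → ℝ) (x : X), T (h + g) x ≤ T h x + T g x)
    (hhom : ∀ (lam : ℝ), 0 ≤ lam → ∀ h : X → ℝ, T (lam • h) = lam • T h)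
    (R : Set X) (hRne : R.Nonempty)
    (hR : ∀ x ∈ R, T (Set.indicator Rᶜ (fun _ => (1:ℝ))) x = 0)
    (hTCA : ∀ x ∈ Rᶜ, ∃ k : ℕ, T^[k+1] (Set.indicator Rᶜ (fun _ => (1:ℝ))) x < 1) :
    ∀ ε : ℝ, 0 < ε → ∃ k₁ : ℕ, ∀ k ≥ k₁, ∀ h : X → ℝ,
      ‖T^[k] h - T^[k] (Set.indicator R h)‖ ≤ ‖h‖ * ε := by
  set u : X → ℝ := Set.indicator Rᶜ (fun _ => (1:ℝ)) with hu
  have hu0 : ∀ x, 0 ≤ u x := fun x => Set.indicator_nonneg (fun _ _ => zero_le_one) x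
  have hu1 : ∀ x, u x ≤ 1 := by
    intro x; rw [hu]; by_cases hx : x ∈ Rᶜ <;> simp [Set.indicator_apply, hx]
  have huR : ∀ x ∈ R, u x = 0 := by
    intro x hx
    simp [hu, Set.indicator_of_notMem, hx]
  -- T u ≤ u
  have hTu : ∀ x, T u x ≤ u x := by
    intro x
    by_cases hx : x ∈ R
    · rw [hR x hx, huR x hx]
    · have : u x = 1 := Set.indicator_of_mem (by simpa using hx) _
      rw [this]
      refine le_trans (hbd u x).2 (ciSup_le hu1)
  -- iterates of u are nonneg and antitone in k
  have hit0 : ∀ k x, 0 ≤ T^[k] u x := fun k => aux_iter_nonneg T hbd k hu0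
  have hstep : ∀ k x, T^[k+1] u x ≤ T^[k] u x := by
    intro k x
    rw [Function.iterate_succ_apply]
    exact aux_iter_mono T hbd hsub k hTu x
  have hanti : ∀ j k, k ≤ j → ∀ x, T^[j] u x ≤ T^[k] u x := by
    intro j k hkj x
    obtain ⟨d, rfl⟩ := Nat.exists_eq_add_of_le hkj
    clear hkj
    induction d with
    | zero => simp
    | succ n ih =>
      have := hstep (k + n) x
      rw [show k + (n+1) = (k+n)+1 from rfl]
      exact le_trans this ih
  -- for every x, some iterate is < 1
  have hall : ∀ x : X, ∃ k, T^[k+1] u x < 1 := by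
    intro x
    by_cases hx : x ∈ R
    · refine ⟨0, ?_⟩
      have : T^[1] u x ≤ u x := by simpa using hTu x
      calc T^[0+1] u x ≤ u x := this
        _ = 0 := huR x hx
        _ < 1 := one_pos
    · exact hTCA x (by simpa using hx)
  choose f hf using hall
  set K : ℕ := Finset.univ.sup f + 1 with hK
  have hK1 : 1 ≤ K := Nat.le_add_left 1 _
  have hKlt : ∀ x, T^[K] u x < 1 := by
    intro x
    refine lt_of_le_of_lt (hanti K (f x + 1) ?_ x) (hf x)
    have : f x ≤ Finset.univ.sup f := Finset.le_sup (Finset.mem_univ x)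
    omega
  have hKR : ∀ x ∈ R, T^[K] u x = 0 := by
    intro x hx
    have h1 : T^[K] u x ≤ T^[1] u x := hanti K 1 hK1 x
    have h2 : T^[1] u x = 0 := by simpa using hR x hx
    have := hit0 K x
    linarith
  -- α
  set α : ℝ := Finset.univ.sup' Finset.univ_nonempty (T^[K] u) with hα
  have hα1 : α < 1 := by
    rw [hα, Finset.sup'_lt_iff]
    exact fun x _ => hKlt x
  have hαx : ∀ x, T^[K] u x ≤ α := fun x => Finset.le_sup' _ (Finset.mem_univ x)
  have hα0 : 0 ≤ α := le_trans (hit0 K (Classical.arbitrary X)) (hαx _)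
  have hKle : ∀ x, T^[K] u x ≤ α * u x := by
    intro x
    by_cases hx : x ∈ R
    · rw [hKR x hx, huR x hx, mul_zero]
    · have : u x = 1 := Set.indicator_of_mem (by simpa using hx) _
      rw [this, mul_one]; exact hαx x
  -- geometric decay
  have hgeo : ∀ n x, T^[n * K] u x ≤ α ^ n * u x := by
    intro n
    induction n with
    | zero => simp
    | succ m ih =>
      intro x
      have h1 : T^[(m+1) * K] u x = T^[K] (T^[m * K] u) x := by
        rw [← Function.iterate_add_apply]
        congr 1
        ring
      rw [h1]
      have h2 : T^[K] (T^[m * K] u) x ≤ T^[K] ((α ^ m) • u) x :=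
        aux_iter_mono T hbd hsub K (fun y => by simpa using ih y) x
      have h3 : T^[K] ((α ^ m) • u) x = α ^ m * T^[K] u x := by
        rw [aux_iter_hom T hhom K _ (pow_nonneg hα0 m)]; simp
      calc T^[K] (T^[m*K] u) x ≤ α ^ m * T^[K] u x := by rw [← h3]; exact h2
        _ ≤ α ^ m * (α * u x) := by
            exact mul_le_mul_of_nonneg_left (hKle x) (pow_nonneg hα0 m)
        _ = α ^ (m+1) * u x := by ring
  intro ε hε
  obtain ⟨n, hn⟩ := exists_pow_lt_of_lt_one hε hα1
  refine ⟨n * K, fun k hk h => ?_⟩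
  set g : X → ℝ := Set.indicator R h with hg
  -- u-bound on iterates for k ≥ n*K
  have hkε : ∀ x, T^[k] u x ≤ ε := by
    intro x
    calc T^[k] u x ≤ T^[n*K] u x := hanti k (n*K) hk x
      _ ≤ α ^ n * u x := hgeo n x
      _ ≤ α ^ n * 1 := mul_le_mul_of_nonneg_left (hu1 x) (pow_nonneg hα0 n)
      _ = α ^ n := mul_one _
      _ ≤ ε := le_of_lt hn
  -- pointwise comparisons
  have hbound : ∀ x, |h x| ≤ ‖h‖ := fun x => by
    simpa using norm_le_pi_norm h x
  have hle1 : ∀ x, h x ≤ g x + (‖h‖ • u) x := by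
    intro x
    by_cases hx : x ∈ R
    · have hgx : g x = h x := Set.indicator_of_mem hx h
      have hnn : 0 ≤ (‖h‖ • u) x := smul_nonneg (norm_nonneg h) (hu0 x)
      simp only [Pi.smul_apply] at hnn ⊢
      rw [hgx]
      linarith
    · have hgx : g x = 0 := Set.indicator_of_notMem hx h
      have hux : u x = 1 := Set.indicator_of_mem (by simpa using hx) _
      have := hbound x
      simp only [Pi.smul_apply, hux, smul_eq_mul, mul_one, hgx, zero_add]
      exact le_trans (le_abs_self _) this
  have hle2 : ∀ x, g x ≤ h x + (‖h‖ • u) x := by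
    intro x
    by_cases hx : x ∈ R
    · have hgx : g x = h x := Set.indicator_of_mem hx h
      have hnn : 0 ≤ (‖h‖ • u) x := smul_nonneg (norm_nonneg h) (hu0 x)
      simp only [Pi.smul_apply] at hnn ⊢
      rw [hgx]
      linarith
    · have hgx : g x = 0 := Set.indicator_of_notMem hx h
      have hux : u x = 1 := Set.indicator_of_mem (by simpa using hx) _
      have := hbound x
      have := neg_abs_le (h x)
      simp only [Pi.smul_apply, hux, smul_eq_mul, mul_one, hgx]
      have h3 := hbound x
      linarith [neg_abs_le (h x), hbound x]
  have key : ∀ x, |T^[k] h x - T^[k] g x| ≤ ‖h‖ * T^[k] u x := by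
    intro x
    have c1 : T^[k] h x ≤ T^[k] g x + ‖h‖ * T^[k] u x := by
      have s1 : T^[k] h x ≤ T^[k] (g + ‖h‖ • u) x :=
        aux_iter_mono T hbd hsub k hle1 x
      have s2 : T^[k] (g + ‖h‖ • u) x ≤ T^[k] g x + T^[k] (‖h‖ • u) x :=
        aux_iter_sub T hbd hsub k g (‖h‖ • u) x
      have s3 : T^[k] (‖h‖ • u) x = ‖h‖ * T^[k] u x := by
        rw [aux_iter_hom T hhom k _ (norm_nonneg h)]; simp
      linarith
    have c2 : T^[k] g x ≤ T^[k] h x + ‖h‖ * T^[k] u x := by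
      have s1 : T^[k] g x ≤ T^[k] (h + ‖h‖ • u) x :=
        aux_iter_mono T hbd hsub k hle2 x
      have s2 : T^[k] (h + ‖h‖ • u) x ≤ T^[k] h x + T^[k] (‖h‖ • u) x :=
        aux_iter_sub T hbd hsub k h (‖h‖ • u) x
      have s3 : T^[k] (‖h‖ • u) x = ‖h‖ * T^[k] u x := by
        rw [aux_iter_hom T hhom k _ (norm_nonneg h)]; simp
      linarith
    rw [abs_sub_le_iff]
    constructor <;> linarith
  refine (pi_norm_le_iff_of_nonneg (by positivity)).mpr fun x => ?_
  have : |T^[k] h x - T^[k] g x| ≤ ‖h‖ * ε := by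
    calc |T^[k] h x - T^[k] g x| ≤ ‖h‖ * T^[k] u x := key x
      _ ≤ ‖h‖ * ε := mul_le_mul_of_nonneg_left (hkε x) (norm_nonneg h)
  simpa [Real.norm_eq_abs] using this
end

section
/- Let T̄ be a coherent upper transition operator, f ∈ L(X), and let m̄_{f,k} := m_{f,k}/(k+1) where m_{f,0} = f and m_{f,k} = f + T̄ m_{f,k−1}. Then for every fixed ℓ ∈ ℕ₀, lim_{k→∞} ‖T̄^ℓ m̄_{f,k} − m̄_{f,k+ℓ}‖∞ = 0. -/
open Filter

theorem stmt_15 {X : Type*} [Fintype X] [Nonempty X]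
    (T : (X → ℝ) → (X → ℝ))
    (hbd : ∀ (h : X → ℝ) (x : X), (⨅ y, h y) ≤ T h x ∧ T h x ≤ ⨆ y, h y)
    (hsub : ∀ (h g : X → ℝ) (x : X), T (h + g) x ≤ T h x + T g x)
    (hhom : ∀ (lam : ℝ), 0 ≤ lam → ∀ h : X → ℝ, T (lam • h) = lam • T h)
    (f : X → ℝ) (m : ℕ → X → ℝ)
    (hm0 : m 0 = f) (hmk : ∀ k : ℕ, m (k+1) = f + T (m k)) :
    ∀ l : ℕ,
      Tendsto
        (fun k : ℕ =>
          ‖T^[l] (((k : ℝ) + 1)⁻¹ • m k) - (((k : ℝ) + (l : ℝ) + 1)⁻¹ • m (k + l))‖)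
        atTop (nhds 0) := by
  have hT0 : T 0 = 0 := by
    have := hhom 0 le_rfl 0
    simpa using this
  have hsup : ∀ (h : X → ℝ) (x : X), T h x ≤ ‖h‖ := by
    intro h x
    refine (hbd h x).2.trans (ciSup_le fun y => ?_)
    have := norm_le_pi_norm h y
    rw [Real.norm_eq_abs] at this
    exact (le_abs_self _).trans this
  have hlip1 : ∀ (h g : X → ℝ) (x : X), T h x - T g x ≤ ‖h - g‖ := by
    intro h g x
    have h1 : T h x ≤ T (h - g) x + T g x := by
      have := hsub (h - g) g x
      simpa using this
    have h2 : T (h - g) x ≤ ‖h - g‖ := hsup _ x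
    linarith
  have hlip : ∀ h g : X → ℝ, ‖T h - T g‖ ≤ ‖h - g‖ := by
    intro h g
    rw [pi_norm_le_iff_of_nonneg (norm_nonneg _)]
    intro x
    rw [Real.norm_eq_abs, abs_le]
    have h1 := hlip1 h g x
    have h2 := hlip1 g h x
    rw [norm_sub_rev] at h2
    constructor <;> simp [Pi.sub_apply] <;> linarith
  have hTnorm : ∀ h : X → ℝ, ‖T h‖ ≤ ‖h‖ := by
    intro h
    have := hlip h 0
    simpa [hT0] using this
  intro l
  set Tf : (X → ℝ) → (X → ℝ) := fun h => f + T h with hTf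
  have hmTf : ∀ k n : ℕ, m (k + n) = Tf^[n] (m k) := by
    intro k n
    induction n with
    | zero => simp
    | succ n ih =>
      rw [show k + (n + 1) = (k + n) + 1 by ring, hmk, ih,
        Function.iterate_succ_apply']
  have hdiff : ∀ (n : ℕ) (h : X → ℝ), ‖T^[n] h - Tf^[n] h‖ ≤ n * ‖f‖ := by
    intro n
    induction n with
    | zero => intro h; simp
    | succ n ih =>
      intro h
      have heq : T^[n+1] h - Tf^[n+1] h
          = (T (T^[n] h) - T (Tf^[n] h)) - f := by
        rw [Function.iterate_succ_apply', Function.iterate_succ_apply']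
        show T (T^[n] h) - (f + T (Tf^[n] h)) = _
        abel
      rw [heq]
      have h1 : ‖(T (T^[n] h) - T (Tf^[n] h)) - f‖
          ≤ ‖T (T^[n] h) - T (Tf^[n] h)‖ + ‖f‖ := norm_sub_le _ _
      have h2 : ‖T (T^[n] h) - T (Tf^[n] h)‖ ≤ ‖T^[n] h - Tf^[n] h‖ := hlip _ _
      have h3 := ih h
      push_cast
      linarith
  have hmnorm : ∀ j : ℕ, ‖m j‖ ≤ ((j : ℝ) + 1) * ‖f‖ := by
    intro j
    induction j with
    | zero => simp [hm0]
    | succ j ih =>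
      rw [hmk]
      have h1 : ‖f + T (m j)‖ ≤ ‖f‖ + ‖T (m j)‖ := norm_add_le _ _
      have h2 := hTnorm (m j)
      push_cast
      linarith
  have hiter_hom : ∀ (n : ℕ) (c : ℝ), 0 ≤ c → ∀ h : X → ℝ,
      T^[n] (c • h) = c • T^[n] h := by
    intro n c hc
    induction n with
    | zero => intro h; simp
    | succ n ih =>
      intro h
      rw [Function.iterate_succ_apply', Function.iterate_succ_apply', ih,
        hhom c hc]
  have key : ∀ k : ℕ,
      ‖T^[l] (((k : ℝ) + 1)⁻¹ • m k) - (((k : ℝ) + (l : ℝ) + 1)⁻¹ • m (k + l))‖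
        ≤ (2 * l * ‖f‖) * (1 / ((k : ℝ) + 1)) := by
    intro k
    have hk1 : (0 : ℝ) < (k : ℝ) + 1 := by positivity
    have hkl1 : (0 : ℝ) < (k : ℝ) + (l : ℝ) + 1 := by positivity
    set a : ℝ := ((k : ℝ) + 1)⁻¹ with ha'
    set b : ℝ := ((k : ℝ) + (l : ℝ) + 1)⁻¹ with hb'
    have ha : (0 : ℝ) ≤ a := by positivity
    have hab : b ≤ a := by
      rw [ha', hb']
      apply inv_anti₀ hk1
      have : (0:ℝ) ≤ (l : ℝ) := Nat.cast_nonneg l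
      linarith
    rw [hiter_hom l a ha]
    have hsplit : a • T^[l] (m k) - b • m (k + l)
        = a • (T^[l] (m k) - Tf^[l] (m k)) + (a - b) • m (k + l) := by
      rw [hmTf k l]
      module
    rw [hsplit]
    have h1 : ‖a • (T^[l] (m k) - Tf^[l] (m k)) + (a - b) • m (k + l)‖
        ≤ ‖a • (T^[l] (m k) - Tf^[l] (m k))‖ + ‖(a - b) • m (k + l)‖ :=
      norm_add_le _ _
    have h2 : ‖a • (T^[l] (m k) - Tf^[l] (m k))‖ ≤ a * ((l : ℝ) * ‖f‖) := by
      rw [norm_smul, Real.norm_eq_abs, abs_of_nonneg ha]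
      exact mul_le_mul_of_nonneg_left (hdiff l (m k)) ha
    have h3 : ‖(a - b) • m (k + l)‖
        ≤ (a - b) * (((k : ℝ) + (l : ℝ) + 1) * ‖f‖) := by
      rw [norm_smul, Real.norm_eq_abs, abs_of_nonneg (sub_nonneg.mpr hab)]
      apply mul_le_mul_of_nonneg_left _ (sub_nonneg.mpr hab)
      have := hmnorm (k + l)
      push_cast at this ⊢
      linarith
    have heq : a * ((l : ℝ) * ‖f‖) + (a - b) * (((k : ℝ) + (l : ℝ) + 1) * ‖f‖)
        = (2 * l * ‖f‖) * (1 / ((k : ℝ) + 1)) := by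
      rw [ha', hb']
      field_simp
      ring
    linarith
  have h0 : Tendsto (fun k : ℕ => (2 * (l : ℝ) * ‖f‖) * (1 / ((k : ℝ) + 1)))
      atTop (nhds 0) := by
    have := tendsto_one_div_add_atTop_nhds_zero_nat.const_mul (2 * (l : ℝ) * ‖f‖)
    simpa using this
  exact squeeze_zero (fun k => norm_nonneg _) key h0
end

section
/- Let T̄ be a coherent upper transition operator with a top class R that is not absorbing, i.e., there exists x ∈ R^c such that T̄^k 1_{R^c}(x) = 1 for all k ∈ ℕ. Then there exists a nonempty set A ⊆ R^c with 1_A ≤ T̄ 1_A. -/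
theorem stmt_18 {X : Type*} [Fintype X] [Nonempty X]
    (T : (X → ℝ) → (X → ℝ))
    (hbd : ∀ (h : X → ℝ) (x : X), (⨅ y, h y) ≤ T h x ∧ T h x ≤ ⨆ y, h y)
    (hsub : ∀ (h g : X → ℝ) (x : X), T (h + g) x ≤ T h x + T g x)
    (hhom : ∀ (lam : ℝ), 0 ≤ lam → ∀ h : X → ℝ, T (lam • h) = lam • T h)
    (R : Set X) (hRne : R.Nonempty)
    (hR : ∀ x ∈ R, T (Set.indicator Rᶜ (fun _ => (1:ℝ))) x = 0)
    (hnotTCA : ∃ x ∈ Rᶜ, ∀ k : ℕ, T^[k+1] (Set.indicator Rᶜ (fun _ => (1:ℝ))) x = 1) :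
    ∃ A : Set X, A.Nonempty ∧ A ⊆ Rᶜ ∧
      ∀ x : X, Set.indicator A (fun _ => (1:ℝ)) x
        ≤ T (Set.indicator A (fun _ => (1:ℝ))) x := by
  classical
  set f : X → ℝ := Set.indicator Rᶜ (fun _ => (1:ℝ)) with hfdef
  -- T is monotone
  have Tmono : ∀ h g : X → ℝ, (∀ y, h y ≤ g y) → ∀ x, T h x ≤ T g x := by
    intro h g hle x
    have h1 : T h x ≤ T g x + T (h - g) x := by
      have := hsub g (h - g) x
      simpa [add_sub_cancel] using this
    have h2 : T (h - g) x ≤ 0 := by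
      refine le_trans (hbd (h - g) x).2 (ciSup_le fun y => ?_)
      simpa [Pi.sub_apply, sub_nonpos] using hle y
    linarith
  -- T fixes constants
  have Tconst : ∀ (c : ℝ) (x : X), T (fun _ => c) x = c := by
    intro c x
    have h1 := (hbd (fun _ => c) x).1
    have h2 := (hbd (fun _ => c) x).2
    rw [ciInf_const] at h1
    rw [ciSup_const] at h2
    linarith
  -- general bounds from hbd
  have Tle : ∀ (h : X → ℝ) (c : ℝ) (x : X), (∀ y, h y ≤ c) → T h x ≤ c := by
    intro h c x hc
    exact le_trans (hbd h x).2 (ciSup_le hc)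
  have Tge : ∀ (h : X → ℝ) (c : ℝ) (x : X), (∀ y, c ≤ h y) → c ≤ T h x := by
    intro h c x hc
    exact le_trans (le_ciInf hc) (hbd h x).1
  -- bounds on f
  have hf0 : ∀ y, 0 ≤ f y := fun y => Set.indicator_nonneg (fun _ _ => zero_le_one) y
  have hf1 : ∀ y, f y ≤ 1 := by
    intro y
    by_cases hy : y ∈ Rᶜ <;> simp [hfdef, Set.indicator_apply, hy]
  -- iterates stay in [0,1]
  have hFbounds : ∀ k, (∀ y, 0 ≤ T^[k] f y) ∧ (∀ y, T^[k] f y ≤ 1) := by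
    intro k
    induction k with
    | zero => exact ⟨hf0, hf1⟩
    | succ k ih =>
      constructor
      · intro y
        rw [Function.iterate_succ_apply']
        exact Tge _ 0 y ih.1
      · intro y
        rw [Function.iterate_succ_apply']
        exact Tle _ 1 y ih.2
  -- T f ≤ f
  have hTf : ∀ y, T f y ≤ f y := by
    intro y
    by_cases hy : y ∈ Rᶜ
    · have : f y = 1 := by simp [hfdef, Set.indicator_apply, hy]
      rw [this]; exact Tle f 1 y hf1
    · have hyR : y ∈ R := by simpa using hy
      have : f y = 0 := by simp [hfdef, Set.indicator_apply, hy]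
      rw [this, hR y hyR]
  -- iterated monotonicity
  have Titer_mono : ∀ (k : ℕ) (h g : X → ℝ), (∀ y, h y ≤ g y) →
      ∀ x, T^[k] h x ≤ T^[k] g x := by
    intro k
    induction k with
    | zero => intro h g hle x; simpa using hle x
    | succ k ih =>
      intro h g hle x
      rw [Function.iterate_succ_apply', Function.iterate_succ_apply']
      exact Tmono _ _ (ih h g hle) x
  -- the iterates are pointwise antitone in k
  have hanti : ∀ x : X, Antitone (fun k => T^[k] f x) := by
    intro x
    refine antitone_nat_of_succ_le fun k => ?_
    have : T^[k+1] f x = T^[k] (T f) x := by rw [Function.iterate_succ_apply]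
    rw [this]
    exact Titer_mono k (T f) f hTf x
  -- define A
  set A : Set X := {x | ∀ k : ℕ, T^[k+1] f x = 1} with hAdef
  obtain ⟨x₀, hx₀c, hx₀⟩ := hnotTCA
  have hAne : A.Nonempty := ⟨x₀, hx₀⟩
  have hAsub : A ⊆ Rᶜ := by
    intro x hx
    by_contra hxc
    have hxR : x ∈ R := by simpa using hxc
    have h1 : T^[0+1] f x = 1 := hx 0
    rw [Function.iterate_one] at h1
    rw [hR x hxR] at h1
    norm_num at h1
  obtain ⟨r, hr⟩ := hRne
  have hrA : r ∉ A := fun h => (hAsub h) hr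
  -- the finset of points outside A
  set s : Finset X := Finset.univ.filter (fun x => x ∉ A) with hsdef
  have hs : s.Nonempty := ⟨r, by simp [hsdef, hrA]⟩
  -- for each x ∉ A, some iterate is < 1
  have hex : ∀ x : {y // y ∈ s}, ∃ k : ℕ, T^[k+1] f x.1 < 1 := by
    intro ⟨x, hxs⟩
    have hxA : x ∉ A := by simpa [hsdef] using hxs
    rw [hAdef] at hxA
    simp only [Set.mem_setOf_eq, not_forall] at hxA
    obtain ⟨k, hk⟩ := hxA
    exact ⟨k, lt_of_le_of_ne ((hFbounds (k+1)).2 x) hk⟩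
  choose gk hgk using hex
  set K : ℕ := Finset.univ.sup gk with hKdef
  set N : ℕ := K + 1 with hNdef
  have hNlt : ∀ x ∉ A, T^[N] f x < 1 := by
    intro x hxA
    have hxs : x ∈ s := by simp [hsdef, hxA]
    have h1 : gk ⟨x, hxs⟩ + 1 ≤ N := by
      have := Finset.le_sup (f := gk) (Finset.mem_univ (⟨x, hxs⟩ : {y // y ∈ s}))
      omega
    exact lt_of_le_of_lt (hanti x h1) (hgk ⟨x, hxs⟩)
  -- sup of T^[N] f over points outside A
  set c : ℝ := s.sup' hs (fun x => T^[N] f x) with hcdef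
  have hc1 : c < 1 := by
    rw [hcdef, Finset.sup'_lt_iff]
    intro x hxs
    exact hNlt x (by simpa [hsdef] using hxs)
  have hc0 : 0 ≤ c := le_trans ((hFbounds N).1 r)
    (Finset.le_sup' (fun x => T^[N] f x) (by simp [hsdef, hrA] : r ∈ s))
  have hcub : ∀ x ∉ A, T^[N] f x ≤ c :=
    fun x hxA => Finset.le_sup' (fun y => T^[N] f y) (by simp [hsdef, hxA])
  have hd : (0:ℝ) < 1 - c := by linarith
  -- values on A
  have hAN : ∀ x ∈ A, T^[N] f x = 1 := fun x hx => hx K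
  have hAN1 : ∀ x ∈ A, T^[N+1] f x = 1 := fun x hx => hx (K+1)
  -- the auxiliary function
  set h0 : X → ℝ := fun y => T^[N] f y - c with hh0def
  set iA : X → ℝ := Set.indicator A (fun _ => (1:ℝ)) with hiAdef
  refine ⟨A, hAne, hAsub, ?_⟩
  intro x
  show iA x ≤ T iA x
  by_cases hx : x ∈ A
  · -- need T iA x ≥ 1
    have hiAx : iA x = 1 := by simp [hiAdef, Set.indicator_apply, hx]
    rw [hiAx]
    -- (1/(1-c)) • h0 ≤ iA pointwise
    have hle : ∀ y, ((1/(1-c)) • h0) y ≤ iA y := by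
      intro y
      by_cases hy : y ∈ A
      · have : iA y = 1 := by simp [hiAdef, Set.indicator_apply, hy]
        rw [this]
        have h1 : h0 y = 1 - c := by rw [hh0def]; simp [hAN y hy]
        simp only [Pi.smul_apply, smul_eq_mul, h1]
        rw [one_div, inv_mul_cancel₀ (ne_of_gt hd)]
      · have : iA y = 0 := by simp [hiAdef, Set.indicator_apply, hy]
        rw [this]
        have h1 : h0 y ≤ 0 := by
          have := hcub y hy
          simp only [hh0def]
          linarith
        simp only [Pi.smul_apply, smul_eq_mul]
        have h2 : (0:ℝ) ≤ 1/(1-c) := by positivity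
        have := mul_le_mul_of_nonneg_left h1 h2
        simpa using this
    have step1 : T ((1/(1-c)) • h0) x ≤ T iA x := Tmono _ _ hle x
    have step2 : T ((1/(1-c)) • h0) x = (1/(1-c)) * T h0 x := by
      rw [hhom (1/(1-c)) (by positivity) h0]
      simp [smul_eq_mul]
    -- T h0 x ≥ 1 - c
    have step3 : 1 - c ≤ T h0 x := by
      have hsplit : T (h0 + (fun _ => c)) x ≤ T h0 x + T (fun _ => c) x :=
        hsub h0 (fun _ => c) x
      have heq : h0 + (fun _ => c) = T^[N] f := by
        funext y; simp [hh0def]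
      rw [heq, Tconst c x] at hsplit
      have hfix : T (T^[N] f) x = 1 := by
        have := hAN1 x hx
        rwa [Function.iterate_succ_apply'] at this
      rw [hfix] at hsplit
      linarith
    have h4 : 1/(1-c) * (1-c) ≤ 1/(1-c) * T h0 x :=
      mul_le_mul_of_nonneg_left step3 (by positivity)
    have h5 : 1/(1-c) * (1-c) = 1 := by field_simp
    linarith
  · have hiAx : iA x = 0 := by simp [hiAdef, Set.indicator_apply, hx]
    rw [hiAx]
    exact Tge iA 0 x (fun y => Set.indicator_nonneg (fun _ _ => zero_le_one) y)
end
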